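/- arXiv:2305.09902 — 4 statements merged into one kernel-verified Lean document; each statement's English description precedes it below -/
import Mathlib

section
/- Let μ₀ > 0, ε > 0, μ(t) = μ₀ − εt, and x(t) = (μ₀/2 + ε/4)·e^{−2t} − μ(t)/2 − ε/4 (so x(0) = 0). Then there exists a unique t* > 0 with x(t*) = 0, and at this crossing μ(t*) = (μ₀ + ε/2)·e^{−2t*} − ε/2 > −ε/2. -/
/-! With `A = μ₀ / 2 + ε / 4`, the crossing function is `x t = A * exp (-2 * t) + ε / 2 * t - A`:
strictly convex, zero at `t = 0` with slope `-μ₀ < 0` there, and equal to `A * exp (-2 * t) > 0`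
at `t = 2 * A / ε`. So it dips below zero and comes back, which gives a positive zero by the
intermediate value theorem, and strict convexity leaves room for only one zero besides `t = 0`. -/

open Real Set

theorem StrictConvexOn.eq_of_apply_eq_of_lt {𝕜 β : Type*} [Field 𝕜] [LinearOrder 𝕜]
    [IsStrictOrderedRing 𝕜] [AddCommMonoid β] [LinearOrder β] [IsOrderedAddMonoid β]
    [Module 𝕜 β] [PosSMulStrictMono 𝕜 β] {s : Set 𝕜} {f : 𝕜 → β} (hf : StrictConvexOn 𝕜 s f)
    {a u v : 𝕜}
    (ha : a ∈ s) (hu : u ∈ s) (hv : v ∈ s) (hau : a < u) (hav : a < v)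
    (hfu : f u = f a) (hfv : f v = f a) : u = v := by
  have below : ∀ {p q : 𝕜}, q ∈ s → a < p → p < q → f q = f a → f p < f a := by
    intro p q hq hap hpq hfq
    have hp : p ∈ openSegment 𝕜 a q := by
      rw [openSegment_eq_Ioo (hap.trans hpq)]
      exact ⟨hap, hpq⟩
    simpa [hfq] using hf.lt_on_openSegment ha hq (hap.trans hpq).ne hp
  by_contra huv
  rcases lt_or_gt_of_ne huv with h | h
  · exact (below hv hau h hfv).ne hfu
  · exact (below hu hav h hfu).ne hfv

theorem strictConvexOn_mul_exp_mul_add {c k : ℝ} (hc : 0 < c) (hk : k ≠ 0) (b d : ℝ) :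
    StrictConvexOn ℝ univ (fun t => c * exp (k * t) + b * t + d) := by
  refine ⟨convex_univ, fun x _ y _ hxy p q hp hq hpq => ?_⟩
  have hexp := strictConvexOn_exp.2 (mem_univ (k * x)) (mem_univ (k * y))
    (by simpa [hk] using hxy) hp hq hpq
  simp only [smul_eq_mul] at hexp ⊢
  rw [show k * (p * x + q * y) = p * (k * x) + q * (k * y) by ring]
  linear_combination c * hexp - d * hpq

theorem hasDerivAt_mul_exp_mul_add (c k b d t : ℝ) :
    HasDerivAt (fun t => c * exp (k * t) + b * t + d) (c * k * exp (k * t) + b) t := by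
  refine (((((hasDerivAt_id' t).const_mul k).exp.const_mul c).add
    ((hasDerivAt_id' t).const_mul b)).add_const d).congr_deriv ?_
  ring

theorem HasDerivAt.exists_gt_apply_lt {f : ℝ → ℝ} {f' a : ℝ} (hf : HasDerivAt f f' a)
    (hf' : f' < 0) : ∃ t, a < t ∧ f t < f a := by
  obtain ⟨h, hslope, hh⟩ :=
    ((hf.tendsto_slope_zero_right.eventually (gt_mem_nhds hf')).and self_mem_nhdsWithin).exists
  rw [smul_eq_mul, inv_mul_lt_iff₀ hh, mul_zero, sub_neg] at hslope
  exact ⟨a + h, lt_add_of_pos_right a hh, hslope⟩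

theorem StrictConvexOn.existsUnique_gt_of_hasDerivAt_neg {f : ℝ → ℝ} {a f' T : ℝ}
    (hf : StrictConvexOn ℝ (Ici a) f) (hcont : ContinuousOn f (Ici a)) (hfa : f a = 0)
    (hd : HasDerivAt f f' a) (hf' : f' < 0) (haT : a < T) (hfT : 0 < f T) :
    ∃! t, a < t ∧ f t = 0 := by
  obtain ⟨t₁, hat₁, hft₁⟩ := hd.exists_gt_apply_lt hf'
  have hmin : a < min t₁ T := lt_min hat₁ haT
  have hsub : uIcc t₁ T ⊆ Ici a := fun u hu => hmin.le.trans hu.1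
  obtain ⟨t, ht, hft⟩ := intermediate_value_uIcc (hcont.mono hsub)
    (mem_uIcc_of_le (hfa ▸ hft₁.le) hfT.le)
  refine ⟨t, ⟨hmin.trans_le ht.1, hft⟩, fun u ⟨hau, hfu⟩ => ?_⟩
  exact hf.eq_of_apply_eq_of_lt self_mem_Ici hau.le (hsub ht) hau (hmin.trans_le ht.1)
    (hfu.trans hfa.symm) (hft.trans hfa.symm)

theorem stommel_drift_unique_crossing
    (μ₀ ε : ℝ) (hμ₀ : 0 < μ₀) (hε : 0 < ε)
    (μ : ℝ → ℝ) (hμ : ∀ t : ℝ, μ t = μ₀ - ε * t)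
    (x : ℝ → ℝ)
    (hx : ∀ t : ℝ, x t = (μ₀ / 2 + ε / 4) * Real.exp (-2 * t) - μ t / 2 - ε / 4) :
    (∃! t : ℝ, 0 < t ∧ x t = 0) ∧
    (∀ t : ℝ, 0 < t → x t = 0 →
      μ t = (μ₀ + ε / 2) * Real.exp (-2 * t) - ε / 2 ∧ -ε / 2 < μ t) := by
  set A := μ₀ / 2 + ε / 4 with hA
  have hA_pos : 0 < A := by positivity
  have hx' : x = fun t => A * exp (-2 * t) + ε / 2 * t + -A :=
    funext fun t => by rw [hx, hμ]; ring
  have hconvex := (strictConvexOn_mul_exp_mul_add (k := -2) hA_pos (by norm_num) (ε / 2) (-A))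
    |>.subset (subset_univ (Ici 0)) (convex_Ici 0)
  have hderiv_neg : A * -2 * exp (-2 * 0) + ε / 2 < 0 := by
    rw [mul_zero, exp_zero]
    linarith
  have hroot : ∃! t : ℝ, 0 < t ∧ x t = 0 := by
    rw [hx']
    refine hconvex.existsUnique_gt_of_hasDerivAt_neg (T := 2 * A / ε) (by fun_prop) (by simp)
      (hasDerivAt_mul_exp_mul_add _ _ _ _ 0) hderiv_neg (by positivity) ?_
    rw [show ε / 2 * (2 * A / ε) = A by field_simp]
    linarith [mul_pos hA_pos (exp_pos (-2 * (2 * A / ε)))]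
  refine ⟨hroot, fun t _ hxt => ?_⟩
  rw [hx, hA] at hxt
  have : 0 < (μ₀ + ε / 2) * exp (-2 * t) := by positivity
  constructor <;> linarith
end

section
/- Fix K > 0. For every ε > 0 the equation e^{2s} = 2K/ε + s + 1 has a unique solution s*(ε) > 0. Moreover s*(ε) − (1/2)·log(2K/ε) → 0 as ε → 0⁺, and consequently the tipping value μ_TP(ε) := −ε/2 − ε·s*(ε) satisfies μ_TP(ε)/(ε·log ε) → 1/2 as ε → 0⁺ (equivalently, μ_TP(ε) ∼ −(ε/2)·log(2K/ε)). -/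
/-!
Put `c = 2K/ε`, so that `s*` is the positive root of `exp (2s) = c + s + 1`. The map
`s ↦ exp (2s) - s` increases on `[0, ∞)` from `1`, which gives the unique root. Since
`exp (2s*) = c (1 + (s* + 1)/c)` and `c ≥ s* + 2 s*²`, one gets `0 < 2s* - log c ≤ 1/s* < 2 / log c`,
so `s* - ½ log c → 0` as `c → ∞`. Writing `log (2K/ε) = log (2K) - log ε` then gives
`μ_TP / (ε log ε) = ½ + O(1) / log ε → ½`.
-/

open Real Filter Set Topology

theorem strictMonoOn_exp_two_mul_sub_self : StrictMonoOn (fun s => exp (2 * s) - s) (Ici 0) := by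
  intro s hs t _ hst
  have hexp_s : 1 ≤ exp (2 * s) := one_le_exp (by simp only [mem_Ici] at hs; linarith)
  have hexp_gap : 2 * (t - s) + 1 ≤ exp (2 * (t - s)) := add_one_le_exp _
  have hsplit : exp (2 * t) = exp (2 * s) * exp (2 * (t - s)) := by
    rw [← exp_add]; ring_nf
  show exp (2 * s) - s < exp (2 * t) - t
  nlinarith

theorem existsUnique_pos_exp_two_mul_eq {c : ℝ} (hc : 0 < c) :
    ∃! s : ℝ, 0 < s ∧ exp (2 * s) = c + s + 1 := by
  have hroot_iff : ∀ s, exp (2 * s) = c + s + 1 ↔ exp (2 * s) - s = c + 1 := fun s => by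
    constructor <;> intro h <;> linarith
  obtain ⟨s, ⟨hs0, -⟩, hs⟩ : ∃ s ∈ Icc 0 (c + 1), exp (2 * s) - s = c + 1 := by
    refine intermediate_value_Icc (by linarith) (by fun_prop) ⟨?_, ?_⟩
    · simp only [mul_zero, exp_zero, sub_zero]; linarith
    · linarith [add_one_le_exp (2 * (c + 1))]
  have hs_pos : 0 < s := hs0.lt_of_ne (by rintro rfl; simp at hs; linarith)
  refine ⟨s, ⟨hs_pos, (hroot_iff s).2 hs⟩, fun t ⟨ht, hteq⟩ => ?_⟩
  exact strictMonoOn_exp_two_mul_sub_self.injOn ht.le hs_pos.le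
    (((hroot_iff t).1 hteq).trans hs.symm)

section Root

variable {c s : ℝ}

theorem log_lt_two_mul_of_exp_two_mul_eq (hc : 0 < c) (hs : 0 ≤ s)
    (heq : exp (2 * s) = c + s + 1) : log c < 2 * s := by
  rw [← log_exp (2 * s), heq]
  exact log_lt_log hc (by linarith)

theorem two_mul_sub_log_le_inv_of_exp_two_mul_eq (hc : 0 < c) (hs : 0 < s)
    (heq : exp (2 * s) = c + s + 1) : 2 * s - log c ≤ s⁻¹ := by
  have hc_ge : s * (s + 1) ≤ c := by
    nlinarith [quadratic_le_exp_of_nonneg (by positivity : 0 ≤ 2 * s)]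
  have hratio : (s + 1) / c ≤ s⁻¹ := by
    rw [div_le_iff₀ hc, ← div_eq_inv_mul, le_div_iff₀ hs]; linarith
  suffices 2 * s ≤ log c + (s + 1) / c by linarith
  -- `log (1 + x) ≤ x` with `x = (s + 1) / c`
  rw [← exp_le_exp, exp_add, exp_log hc, heq]
  have := add_one_le_exp ((s + 1) / c)
  have : c * ((s + 1) / c + 1) = c + s + 1 := by field_simp; ring
  nlinarith

theorem tendsto_two_mul_sub_log_of_exp_two_mul_eq {α : Type*} {l : Filter α} {c s : α → ℝ}
    (hc : Tendsto c l atTop) (hs : ∀ᶠ a in l, 0 < s a ∧ exp (2 * s a) = c a + s a + 1) :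
    Tendsto (fun a => 2 * s a - log (c a)) l (𝓝 0) := by
  have hbound : Tendsto (fun a => 2 / log (c a)) l (𝓝 0) :=
    (tendsto_log_atTop.comp hc).const_div_atTop 2
  refine tendsto_of_tendsto_of_tendsto_of_le_of_le' tendsto_const_nhds hbound ?_ ?_
  all_goals
    filter_upwards [hs, hc.eventually_gt_atTop 1] with a ⟨hs_pos, heq⟩ hc_gt
    have hlog_lt := log_lt_two_mul_of_exp_two_mul_eq (by linarith) hs_pos.le heq
  · linarith
  · have hlog_pos : 0 < log (c a) := log_pos hc_gt
    calc 2 * s a - log (c a) ≤ (s a)⁻¹ :=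
          two_mul_sub_log_le_inv_of_exp_two_mul_eq (by linarith) hs_pos heq
      _ ≤ 2 / log (c a) := by
          rw [inv_eq_one_div, div_le_div_iff₀ hs_pos hlog_pos]; linarith

end Root

theorem tendsto_div_mul_log_of_tendsto_sub_half_log {a : ℝ} (ha : a ≠ 0) {s : ℝ → ℝ}
    (hs : Tendsto (fun ε => s ε - (1 / 2) * log (a / ε)) (𝓝[>] 0) (𝓝 0)) :
    Tendsto (fun ε => (-ε / 2 - ε * s ε) / (ε * log ε)) (𝓝[>] 0) (𝓝 (1 / 2)) := by
  set C := -(1 / 2) - (1 / 2) * log a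
  have hinv_log : Tendsto (fun ε => (log ε)⁻¹) (𝓝[>] 0) (𝓝 0) :=
    tendsto_log_nhdsGT_zero.inv_tendsto_atBot
  have hlim : Tendsto (fun ε => 1 / 2 + (C - (s ε - (1 / 2) * log (a / ε))) * (log ε)⁻¹)
      (𝓝[>] 0) (𝓝 (1 / 2)) := by
    simpa using tendsto_const_nhds.add ((tendsto_const_nhds.sub hs).mul hinv_log)
  refine hlim.congr' ?_
  filter_upwards [Ioo_mem_nhdsGT (zero_lt_one' ℝ)] with ε ⟨hε0, hε1⟩
  have hlog_ne : log ε ≠ 0 := (log_neg hε0 hε1).ne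
  rw [log_div ha hε0.ne']
  field_simp
  ring

theorem stommel_drift_tipping_asymptotics
    (K : ℝ) (hK : 0 < K) :
    (∀ ε : ℝ, 0 < ε → ∃! s : ℝ, 0 < s ∧ Real.exp (2 * s) = 2 * K / ε + s + 1) ∧
    (∀ sStar : ℝ → ℝ,
      (∀ ε : ℝ, 0 < ε →
        0 < sStar ε ∧ Real.exp (2 * sStar ε) = 2 * K / ε + sStar ε + 1) →
      Tendsto (fun ε => sStar ε - (1 / 2) * Real.log (2 * K / ε))
        (nhdsWithin 0 (Set.Ioi 0)) (nhds 0) ∧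
      Tendsto (fun ε => (-ε / 2 - ε * sStar ε) / (ε * Real.log ε))
        (nhdsWithin 0 (Set.Ioi 0)) (nhds (1 / 2))) := by
  refine ⟨fun ε hε => existsUnique_pos_exp_two_mul_eq (by positivity), fun sStar hsStar => ?_⟩
  have hc : Tendsto (fun ε => 2 * K / ε) (𝓝[>] 0) atTop :=
    tendsto_inv_nhdsGT_zero.const_mul_atTop (by positivity)
  have hdiff := (tendsto_two_mul_sub_log_of_exp_two_mul_eq hc
    (eventually_mem_nhdsWithin.mono hsStar)).const_mul (1 / 2)
  have hhalf : Tendsto (fun ε => sStar ε - (1 / 2) * log (2 * K / ε)) (𝓝[>] 0) (𝓝 0) := by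
    simpa [mul_sub, ← mul_assoc] using hdiff
  exact ⟨hhalf, tendsto_div_mul_log_of_tendsto_sub_half_log (by positivity) hhalf⟩
end

section
/- Let μ₀, A ∈ ℝ, ω ≥ 0 and 0 ≤ ε₁ < ε₂. Let x₁, x₂ : [0,∞) → ℝ be differentiable with xᵢ'(t) = 2|xᵢ(t)| − (μ₀ − εᵢ·t) + A·cos(ωt) for all t ≥ 0 and x₁(0) = x₂(0). Then x₂(t) > x₁(t) for all t > 0. Consequently, if both solutions reach a tipping threshold K with x₁(0) = x₂(0) < K, the tipping time is strictly decreasing in the drift rate ε. -/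
/-!
The difference `u = x₂ - x₁` satisfies `u' = 2 (|x₂| - |x₁|) + (ε₂ - ε₁) t > -2 |u|` for `t > 0`,
the forcing terms cancelling. A barrier argument first shows `u ≥ 0`; then `u' > -2 u`, so
`e^{2t} u` is strictly increasing from `0`. The second claim follows by the intermediate value
theorem: `x₂` already exceeds `K` at the moment `x₁` reaches it.
-/

open Real Set

section DifferentialInequality

variable {u u' : ℝ → ℝ} {a b L : ℝ}

theorem nonneg_of_hasDerivWithinAt_of_mul_lt (hcont : ContinuousOn u (Icc a b))
    (hderiv : ∀ t ∈ Ico a b, HasDerivWithinAt u (u' t) (Ici t) t)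
    (hbound : ∀ t ∈ Ioo a b, u t < 0 → L * u t < u' t) (ha : 0 ≤ u a) :
    ∀ t ∈ Icc a b, 0 ≤ u t := by
  intro t ht
  -- `-u` can only touch the barrier `η e^{L (s - a)}` where `u < 0`, hence not at `a`.
  have fence : ∀ η > 0, -u t ≤ η * exp (L * (t - a)) := by
    intro η hη
    have hB : ∀ s, HasDerivAt (fun s => η * exp (L * (s - a))) (η * (exp (L * (s - a)) * L)) s :=
      fun s => (((hasDerivAt_id s).sub_const a).const_mul L |>.exp.const_mul η).congr_deriv
        (by simp)
    refine image_le_of_deriv_right_lt_deriv_boundary hcont.neg (fun s hs => (hderiv s hs).neg)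
      (by simp only [Pi.neg_apply, sub_self, mul_zero, exp_zero, mul_one]; linarith) hB
      (fun s hs htouch => ?_) ht
    rw [Pi.neg_apply] at htouch
    have hneg : u s < 0 := by
      have := mul_pos hη (exp_pos (L * (s - a)))
      linarith
    have hsa : a < s := lt_of_le_of_ne hs.1 fun h => (h ▸ hneg).not_ge ha
    have := hbound s ⟨hsa, hs.2⟩ hneg
    rw [show u s = -(η * exp (L * (s - a))) by linarith] at this
    linarith
  by_contra! hneg
  have hexp := exp_pos (L * (t - a))
  have := fence (-u t / 2 / exp (L * (t - a))) (div_pos (by linarith) hexp)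
  rw [div_mul_cancel₀ _ hexp.ne'] at this
  linarith

theorem pos_of_hasDerivAt_of_neg_mul_lt (hcont : ContinuousOn u (Icc a b))
    (hderiv : ∀ t ∈ Ioo a b, HasDerivAt u (u' t) t)
    (hbound : ∀ t ∈ Ioo a b, -L * u t < u' t) (ha : 0 ≤ u a) :
    ∀ t ∈ Ioc a b, 0 < u t := by
  have hmono : StrictMonoOn (fun s => exp (L * s) * u s) (Icc a b) := by
    refine strictMonoOn_of_hasDerivWithinAt_pos (convex_Icc a b)
      ((continuous_const.mul continuous_id).rexp.continuousOn.mul hcont)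
      (f' := fun s => exp (L * s) * (L * u s + u' s)) (fun s hs => ?_) (fun s hs => ?_)
    · rw [interior_Icc] at hs
      refine (((hasDerivAt_id s).const_mul L).exp.mul (hderiv s hs)).hasDerivWithinAt.congr_deriv ?_
      simp only [id, mul_one]
      ring
    · rw [interior_Icc] at hs
      have := hbound s hs
      exact mul_pos (exp_pos _) (by linarith)
  intro t ht
  have hlt := hmono (left_mem_Icc.mpr (ht.1.le.trans ht.2)) (Ioc_subset_Icc_self ht) ht.1
  exact pos_of_mul_pos_right ((mul_nonneg (exp_pos _).le ha).trans_lt hlt) (exp_pos _).le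

theorem pos_of_hasDerivAt_of_neg_mul_abs_lt (hcont : ContinuousOn u (Icc a b))
    (hderiv : ∀ t ∈ Ico a b, HasDerivAt u (u' t) t)
    (hbound : ∀ t ∈ Ioo a b, -L * |u t| < u' t) (ha : 0 ≤ u a) :
    ∀ t ∈ Ioc a b, 0 < u t := by
  have hnonneg := nonneg_of_hasDerivWithinAt_of_mul_lt hcont
    (fun t ht => (hderiv t ht).hasDerivWithinAt)
    (fun t ht hneg => by simpa [abs_of_neg hneg] using hbound t ht) ha
  refine pos_of_hasDerivAt_of_neg_mul_lt (L := L) hcont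
    (fun t ht => hderiv t (Ioo_subset_Ico_self ht)) (fun t ht => ?_) ha
  simpa [abs_of_nonneg (hnonneg t (Ioo_subset_Icc_self ht))] using hbound t ht

end DifferentialInequality

theorem ContinuousOn.lt_of_forall_mem_Ico_ne {g : ℝ → ℝ} {a b c K : ℝ} (hab : a ≤ b)
    (hg : ContinuousOn g (Icc a b)) (ha : g a ≤ K) (hb : K < g b)
    (hc : ∀ s ∈ Ico a c, g s ≠ K) : c < b := by
  by_contra! hbc
  obtain ⟨s, hs, hsK⟩ := intermediate_value_Ico hab hg ⟨ha, hb⟩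
  exact hc s ⟨hs.1, hs.2.trans_le hbc⟩ hsK

theorem stommel_tipping_time_decreasing_in_drift_general
    (μ₀ A ω : ℝ)
    (ε₁ ε₂ : ℝ) (hε : ε₁ < ε₂)
    (x₁ x₂ : ℝ → ℝ)
    (hderiv₁ : ∀ t : ℝ, 0 ≤ t →
      HasDerivAt x₁ (2 * |x₁ t| - (μ₀ - ε₁ * t) + A * Real.cos (ω * t)) t)
    (hderiv₂ : ∀ t : ℝ, 0 ≤ t →
      HasDerivAt x₂ (2 * |x₂ t| - (μ₀ - ε₂ * t) + A * Real.cos (ω * t)) t)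
    (hinit : x₁ 0 = x₂ 0) :
    (∀ t : ℝ, 0 < t → x₁ t < x₂ t) ∧
    (∀ K : ℝ, x₁ 0 < K →
      ∀ t₁ t₂ : ℝ,
        (0 < t₁ ∧ x₁ t₁ = K ∧ ∀ s ∈ Set.Ico (0 : ℝ) t₁, x₁ s ≠ K) →
        (0 < t₂ ∧ x₂ t₂ = K ∧ ∀ s ∈ Set.Ico (0 : ℝ) t₂, x₂ s ≠ K) →
        t₂ < t₁) := by
  have hderiv : ∀ t ∈ Ici (0 : ℝ), HasDerivAt (x₂ - x₁)
      (2 * |x₂ t| - (μ₀ - ε₂ * t) + A * Real.cos (ω * t)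
        - (2 * |x₁ t| - (μ₀ - ε₁ * t) + A * Real.cos (ω * t))) t :=
    fun t ht => (hderiv₂ t ht).sub (hderiv₁ t ht)
  have hcont : ContinuousOn (x₂ - x₁) (Ici 0) := fun t ht =>
    (hderiv t ht).continuousAt.continuousWithinAt
  -- `| |x₂| - |x₁| | ≤ |x₂ - x₁|`, and the drift gap `(ε₂ - ε₁) t` is positive for `t > 0`.
  have hbound : ∀ t ∈ Ioi (0 : ℝ), -2 * |(x₂ - x₁) t| < 2 * |x₂ t| - (μ₀ - ε₂ * t)
      + A * Real.cos (ω * t) - (2 * |x₁ t| - (μ₀ - ε₁ * t) + A * Real.cos (ω * t)) := by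
    intro t ht
    have := abs_sub_abs_le_abs_sub (x₁ t) (x₂ t)
    rw [abs_sub_comm] at this
    have := mul_pos (sub_pos.mpr hε) (mem_Ioi.mp ht)
    simp only [Pi.sub_apply]
    linarith
  have hpos : ∀ t : ℝ, 0 < t → x₁ t < x₂ t := fun t ht => sub_pos.mp <|
    pos_of_hasDerivAt_of_neg_mul_abs_lt (hcont.mono Icc_subset_Ici_self)
      (fun s hs => hderiv s hs.1) (fun s hs => hbound s hs.1)
      (by simp [hinit]) t ⟨ht, le_rfl⟩
  refine ⟨hpos, fun K hK t₁ t₂ ⟨ht₁, hx₁K, _⟩ ⟨_, _, hx₂K⟩ => ?_⟩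
  exact ContinuousOn.lt_of_forall_mem_Ico_ne ht₁.le
    (fun s hs => (hderiv₂ s hs.1).continuousAt.continuousWithinAt) (hinit ▸ hK.le)
    (hx₁K ▸ hpos t₁ ht₁) hx₂K

theorem stommel_tipping_time_decreasing_in_drift
    (μ₀ A ω : ℝ) (hω : 0 ≤ ω)
    (ε₁ ε₂ : ℝ) (hε₁ : 0 ≤ ε₁) (hε : ε₁ < ε₂)
    (x₁ x₂ : ℝ → ℝ)
    (hderiv₁ : ∀ t : ℝ, 0 ≤ t →
      HasDerivAt x₁ (2 * |x₁ t| - (μ₀ - ε₁ * t) + A * Real.cos (ω * t)) t)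
    (hderiv₂ : ∀ t : ℝ, 0 ≤ t →
      HasDerivAt x₂ (2 * |x₂ t| - (μ₀ - ε₂ * t) + A * Real.cos (ω * t)) t)
    (hinit : x₁ 0 = x₂ 0) :
    (∀ t : ℝ, 0 < t → x₁ t < x₂ t) ∧
    (∀ K : ℝ, x₁ 0 < K →
      ∀ t₁ t₂ : ℝ,
        (0 < t₁ ∧ x₁ t₁ = K ∧ ∀ s ∈ Set.Ico (0 : ℝ) t₁, x₁ s ≠ K) →
        (0 < t₂ ∧ x₂ t₂ = K ∧ ∀ s ∈ Set.Ico (0 : ℝ) t₂, x₂ s ≠ K) →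
        t₂ < t₁) :=
  stommel_tipping_time_decreasing_in_drift_general μ₀ A ω ε₁ ε₂ hε x₁ x₂ hderiv₁ hderiv₂ hinit
end

section
/- Let g : [0,∞) → ℝ be continuous, let 0 ≤ α₁ < α₂, and let x₁, x₂ : [0,∞) → ℝ be differentiable with xᵢ'(t) = 2·√(xᵢ(t)² + αᵢ²) − 2αᵢ + g(t) for all t ≥ 0 and x₁(0) = x₂(0). Then x₂(t) ≤ x₁(t) for all t ≥ 0. In particular, for the drifting forced model g(t) = −(μ₀ − εt) + A·cos(ωt) with ε > 0, any tipping time (first time x reaches a threshold K with x' > 0 there) is non-decreasing in the smoothing parameter α, and the tipping value μ_TP = μ₀ − ε·t_TP is non-increasing in α: smoothing delays tipping. -/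
/-!
Writing `hₐ(x) = 2√(x² + α²) - 2α`, the difference `y = x₂ - x₁` satisfies
`y' = (h_{α₂}(x₂) - h_{α₁}(x₂)) + (h_{α₁}(x₂) - h_{α₁}(x₁)) ≤ 0 + 2|y|`, since `hₐ(x)` is
antitone in `α` and `2`-Lipschitz in `x`. So wherever `y > 0` it grows at most like `e^{2t}`;
fencing `y` strictly below `ε e^{3t}` for every `ε > 0` gives `y ≤ 0`.
For tipping times: `x₁` lies below `K` on `[0, t₁)`, because it does not meet `K` there and it
crosses `K` upwards at `t₁`. If `t₂ < t₁` then `K = x₂(t₂) ≤ x₁(t₂) < K`.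
-/

open Real Filter Set Topology

theorem IsPreconnected.forall_lt_of_forall_ne {X α : Type*} [TopologicalSpace X] [LinearOrder α]
    [TopologicalSpace α] [OrderClosedTopology α] {s : Set X} (hs : IsPreconnected s)
    {f : X → α} (hf : ContinuousOn f s) {K : α} (hne : ∀ x ∈ s, f x ≠ K) {c : X} (hc : c ∈ s)
    (hcK : f c < K) : ∀ x ∈ s, f x < K := by
  intro x hx
  by_contra! hKx
  obtain ⟨y, hy, hyK⟩ := hs.intermediate_value₂ hc hx hf continuousOn_const hcK.le hKx
  exact hne y hy hyK

theorem HasDerivAt.eventually_nhdsLT_lt {f : ℝ → ℝ} {f' t : ℝ} (hf : HasDerivAt f f' t)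
    (hf' : 0 < f') : ∀ᶠ s in 𝓝[<] t, f s < f t := by
  have hslope := (hasDerivAt_iff_tendsto_slope.mp hf).mono_left (nhdsLT_le_nhdsNE t)
  filter_upwards [hslope.eventually (lt_mem_nhds hf'), self_mem_nhdsWithin] with s hs hst
  exact (slope_pos_iff_gt hst).mp hs

theorem lt_on_Ico_of_upcrossing {x : ℝ → ℝ} {x' a t K : ℝ} (hx : ContinuousOn x (Ico a t))
    (hderiv : HasDerivAt x x' t) (hpos : 0 < x') (hxt : x t = K) (hne : ∀ s ∈ Ico a t, x s ≠ K) :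
    ∀ s ∈ Ico a t, x s < K := by
  intro s hs
  have hbelow : ∀ᶠ r in 𝓝[<] t, r ∈ Ico a t ∧ x r < K := by
    filter_upwards [Ico_mem_nhdsLT (hs.1.trans_lt hs.2), hxt ▸ hderiv.eventually_nhdsLT_lt hpos]
      with r hr hrK
    exact ⟨hr, hrK⟩
  obtain ⟨c, hc, hcK⟩ := hbelow.exists
  exact isPreconnected_Ico.forall_lt_of_forall_ne hx hne hc hcK s hs

theorem nonpos_of_hasDerivWithinAt_le_mul {y y' : ℝ → ℝ} {a b K : ℝ}
    (hy : ContinuousOn y (Icc a b)) (hy' : ∀ t ∈ Ico a b, HasDerivWithinAt y (y' t) (Ici t) t)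
    (ha : y a ≤ 0) (hK : ∀ t ∈ Ico a b, 0 < y t → y' t ≤ K * y t) :
    ∀ ⦃t⦄, t ∈ Icc a b → y t ≤ 0 := by
  intro t ht
  have hfence : ∀ ε > 0, y t ≤ ε * exp ((K + 1) * (t - a)) := by
    intro ε hε
    have hB : ∀ s, HasDerivAt (fun s => ε * exp ((K + 1) * (s - a)))
        ((K + 1) * (ε * exp ((K + 1) * (s - a)))) s := fun s =>
      ((((hasDerivAt_id' s).sub_const a).const_mul (K + 1)).exp.const_mul ε).congr_deriv
        (by ring)
    refine image_le_of_deriv_right_lt_deriv_boundary hy hy' ?_ hB (fun s hs hys => ?_) ht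
    · simpa using ha.trans hε.le
    · have hBs : 0 < ε * exp ((K + 1) * (s - a)) := by positivity
      have hgrowth := hK s hs (hys ▸ hBs)
      rw [hys] at hgrowth
      linarith
  refine le_of_forall_pos_le_add fun ε hε => ?_
  have hexp := exp_pos ((K + 1) * (t - a))
  simpa [div_mul_cancel₀ _ hexp.ne'] using hfence (ε / exp ((K + 1) * (t - a))) (by positivity)

/-- The paper's `hₐ`, the smoothing of `2|x|`. -/
noncomputable def smoothedAbs (α x : ℝ) : ℝ := 2 * √(x ^ 2 + α ^ 2) - 2 * α

theorem smoothedAbs_antitone (x : ℝ) : Antitone (smoothedAbs · x) := by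
  intro a b hab
  have hs : a ≤ √(x ^ 2 + a ^ 2) := le_sqrt_of_sq_le (by nlinarith)
  have hsq := sq_sqrt (by positivity : 0 ≤ x ^ 2 + a ^ 2)
  have : √(x ^ 2 + b ^ 2) ≤ √(x ^ 2 + a ^ 2) + (b - a) :=
    (sqrt_le_left (by linarith [sqrt_nonneg (x ^ 2 + a ^ 2)])).mpr (by nlinarith)
  simp only [smoothedAbs]
  linarith

theorem sqrt_sq_add_sub_sqrt_sq_add_le_abs (a b : ℝ) {c : ℝ} (hc : 0 ≤ c) :
    √(a ^ 2 + c) - √(b ^ 2 + c) ≤ |a - b| := by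
  have hb : |b| ≤ √(b ^ 2 + c) := abs_le_sqrt (by linarith)
  have hsq := sq_sqrt (by positivity : 0 ≤ b ^ 2 + c)
  have hcross : b * (a - b) ≤ |b| * |a - b| := abs_mul b (a - b) ▸ le_abs_self _
  have : √(a ^ 2 + c) ≤ √(b ^ 2 + c) + |a - b| :=
    (sqrt_le_left (by positivity)).mpr
      (by nlinarith [mul_le_mul_of_nonneg_right hb (abs_nonneg (a - b)), sq_abs (a - b)])
  linarith

theorem smoothedAbs_sub_le (α x y : ℝ) : smoothedAbs α x - smoothedAbs α y ≤ 2 * |x - y| := by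
  have := sqrt_sq_add_sub_sqrt_sq_add_le_abs x y (sq_nonneg α)
  simp only [smoothedAbs]
  linarith

theorem smoothedAbs_solution_le {g : ℝ → ℝ} {α₁ α₂ : ℝ} (hα : α₁ ≤ α₂) {x₁ x₂ : ℝ → ℝ}
    (h₁ : ∀ t, 0 ≤ t → HasDerivAt x₁ (smoothedAbs α₁ (x₁ t) + g t) t)
    (h₂ : ∀ t, 0 ≤ t → HasDerivAt x₂ (smoothedAbs α₂ (x₂ t) + g t) t)
    (h₀ : x₂ 0 ≤ x₁ 0) {t : ℝ} (ht : 0 ≤ t) : x₂ t ≤ x₁ t := by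
  have hy : ∀ s, 0 ≤ s → HasDerivAt (x₂ - x₁)
      (smoothedAbs α₂ (x₂ s) + g s - (smoothedAbs α₁ (x₁ s) + g s)) s :=
    fun s hs => (h₂ s hs).sub (h₁ s hs)
  have hgrowth : ∀ s ∈ Ico 0 t, 0 < (x₂ - x₁) s →
      smoothedAbs α₂ (x₂ s) + g s - (smoothedAbs α₁ (x₁ s) + g s) ≤ 2 * (x₂ - x₁) s := by
    intro s _ hpos
    rw [Pi.sub_apply] at hpos ⊢
    calc smoothedAbs α₂ (x₂ s) + g s - (smoothedAbs α₁ (x₁ s) + g s)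
        ≤ smoothedAbs α₁ (x₂ s) - smoothedAbs α₁ (x₁ s) := by
          linarith [smoothedAbs_antitone (x₂ s) hα]
      _ ≤ 2 * |x₂ s - x₁ s| := smoothedAbs_sub_le α₁ (x₂ s) (x₁ s)
      _ = 2 * (x₂ s - x₁ s) := by rw [abs_of_pos hpos]
  exact sub_nonpos.mp <| nonpos_of_hasDerivWithinAt_le_mul
    (fun s hs => (hy s hs.1).continuousAt.continuousWithinAt)
    (fun s hs => (hy s hs.1).hasDerivWithinAt) (sub_nonpos.mpr h₀) hgrowth ⟨ht, le_rfl⟩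

theorem smoothing_delays_tipping_general
    (g : ℝ → ℝ)
    (α₁ α₂ : ℝ) (hα : α₁ < α₂)
    (x₁ x₂ : ℝ → ℝ)
    (hderiv₁ : ∀ t : ℝ, 0 ≤ t →
      HasDerivAt x₁ (2 * Real.sqrt ((x₁ t) ^ 2 + α₁ ^ 2) - 2 * α₁ + g t) t)
    (hderiv₂ : ∀ t : ℝ, 0 ≤ t →
      HasDerivAt x₂ (2 * Real.sqrt ((x₂ t) ^ 2 + α₂ ^ 2) - 2 * α₂ + g t) t)
    (hinit : x₁ 0 = x₂ 0) :
    (∀ t : ℝ, 0 ≤ t → x₂ t ≤ x₁ t) ∧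
    (∀ μ₀ ε A ω K : ℝ, 0 < ε →
      (∀ t : ℝ, g t = -(μ₀ - ε * t) + A * Real.cos (ω * t)) →
      ∀ t₁ t₂ : ℝ,
        (0 ≤ t₁ ∧ x₁ t₁ = K ∧
          0 < 2 * Real.sqrt ((x₁ t₁) ^ 2 + α₁ ^ 2) - 2 * α₁ + g t₁ ∧
          ∀ s ∈ Set.Ico (0 : ℝ) t₁, x₁ s ≠ K) →
        (0 ≤ t₂ ∧ x₂ t₂ = K ∧
          0 < 2 * Real.sqrt ((x₂ t₂) ^ 2 + α₂ ^ 2) - 2 * α₂ + g t₂ ∧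
          ∀ s ∈ Set.Ico (0 : ℝ) t₂, x₂ s ≠ K) →
        t₁ ≤ t₂ ∧ μ₀ - ε * t₂ ≤ μ₀ - ε * t₁) := by
  have hcomp : ∀ t : ℝ, 0 ≤ t → x₂ t ≤ x₁ t := fun t ht =>
    smoothedAbs_solution_le hα.le hderiv₁ hderiv₂ hinit.ge ht
  refine ⟨hcomp, fun μ₀ ε A ω K hε _ t₁ t₂ ⟨ht₁, hK₁, hup₁, hne₁⟩ ⟨ht₂, hK₂, _⟩ => ?_⟩
  have hbelow₁ : ∀ s ∈ Ico 0 t₁, x₁ s < K :=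
    lt_on_Ico_of_upcrossing (fun s hs => (hderiv₁ s hs.1).continuousAt.continuousWithinAt)
      (hderiv₁ t₁ ht₁) hup₁ hK₁ hne₁
  have ht : t₁ ≤ t₂ := by
    by_contra! hlt
    linarith [hcomp t₂ ht₂, hbelow₁ t₂ ⟨ht₂, hlt⟩]
  exact ⟨ht, sub_le_sub_left (mul_le_mul_of_nonneg_left ht hε.le) μ₀⟩

theorem smoothing_delays_tipping
    (g : ℝ → ℝ) (hg : Continuous g)
    (α₁ α₂ : ℝ) (hα₁ : 0 ≤ α₁) (hα : α₁ < α₂)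
    (x₁ x₂ : ℝ → ℝ)
    (hderiv₁ : ∀ t : ℝ, 0 ≤ t →
      HasDerivAt x₁ (2 * Real.sqrt ((x₁ t) ^ 2 + α₁ ^ 2) - 2 * α₁ + g t) t)
    (hderiv₂ : ∀ t : ℝ, 0 ≤ t →
      HasDerivAt x₂ (2 * Real.sqrt ((x₂ t) ^ 2 + α₂ ^ 2) - 2 * α₂ + g t) t)
    (hinit : x₁ 0 = x₂ 0) :
    (∀ t : ℝ, 0 ≤ t → x₂ t ≤ x₁ t) ∧
    (∀ μ₀ ε A ω K : ℝ, 0 < ε →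
      (∀ t : ℝ, g t = -(μ₀ - ε * t) + A * Real.cos (ω * t)) →
      ∀ t₁ t₂ : ℝ,
        (0 ≤ t₁ ∧ x₁ t₁ = K ∧
          0 < 2 * Real.sqrt ((x₁ t₁) ^ 2 + α₁ ^ 2) - 2 * α₁ + g t₁ ∧
          ∀ s ∈ Set.Ico (0 : ℝ) t₁, x₁ s ≠ K) →
        (0 ≤ t₂ ∧ x₂ t₂ = K ∧
          0 < 2 * Real.sqrt ((x₂ t₂) ^ 2 + α₂ ^ 2) - 2 * α₂ + g t₂ ∧
          ∀ s ∈ Set.Ico (0 : ℝ) t₂, x₂ s ≠ K) →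
        t₁ ≤ t₂ ∧ μ₀ - ε * t₂ ≤ μ₀ - ε * t₁) :=
  smoothing_delays_tipping_general g α₁ α₂ hα x₁ x₂ hderiv₁ hderiv₂ hinit
end
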